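/- arXiv:1705.10837 — 2 statements merged into one kernel-verified Lean document; each statement's English description precedes it below -/
import Mathlib

section
/- Let 𝔊 be a unital C*-algebra, π : 𝔊 → B(H) a unital *-representation on a complex Hilbert space H, and Ω ∈ H a cyclic unit vector for π (the set {π(A)Ω : A ∈ 𝔊} is dense in H). Define the state ω(A) = ⟨Ω, π(A)Ω⟩. Then the map T ↦ ω_T, where ω_T(A) := ⟨TΩ, π(A)Ω⟩, is a bijection from the set {T ∈ π(𝔊)′ : T self-adjoint, 0 ≤ T ≤ 1} of positive contractions in the commutant of π(𝔊) onto the set of positive linear functionals ρ on 𝔊 with ρ ≤ ω. -/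
open scoped ComplexOrder

variable {A H : Type*}
  [NormedRing A] [StarRing A] [CStarRing A] [NormedAlgebra ℂ A] [CompleteSpace A]
  [StarModule ℂ A]
  [NormedAddCommGroup H] [InnerProductSpace ℂ H] [CompleteSpace H]

/-- The linear functional `a ↦ ⟨ξ, π(a) Ω⟩` associated with a representation `π`
and vectors `ξ, Ω`. -/
noncomputable def vectorFunctional (π : A →⋆ₐ[ℂ] (H →L[ℂ] H)) (ξ Ω : H) :
    A →ₗ[ℂ] ℂ where
  toFun a := (inner ℂ ξ (π a Ω) : ℂ)
  map_add' a b := by simp [map_add, ContinuousLinearMap.add_apply, inner_add_right]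
  map_smul' c a := by simp [map_smul, ContinuousLinearMap.smul_apply, inner_smul_right]


/-!
An operator commuting with `π` is determined by its value at the cyclic vector `Ω`, and `T Ω` is
determined by `ω_T`; this gives injectivity. For a commuting `T` one has
`ω_T(a⋆a) = ⟪T π(a)Ω, π(a)Ω⟫`, so `0 ≤ T ≤ 1` gives `0 ≤ ω_T ≤ ω`.

Conversely, for `0 ≤ ρ ≤ ω`, the Cauchy–Schwarz inequality for `ρ` gives
`|ρ(b⋆a)| ≤ ‖π(b)Ω‖ ‖π(a)Ω‖`, so `(π(b)Ω, π(a)Ω) ↦ ρ(b⋆a)` is a bounded sesquilinear form on the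
dense subspace `π(𝔊)Ω`, represented by an operator `T` with `⟪T π(b)Ω, π(a)Ω⟫ = ρ(b⋆a)`.
The identity `(c b)⋆a = b⋆(c⋆a)` makes `T` commute with `π`, and positivity of `ρ` and `ω - ρ`
on the dense subspace gives `0 ≤ T ≤ 1`; taking `b = 1` gives `ω_T = ρ`.
-/

open scoped InnerProductSpace ComplexConjugate

section StarMulForm

variable {R : Type*} [Ring R] [StarRing R] [Algebra ℂ R] {ρ : R →ₗ[ℂ] ℂ}

theorem im_apply_star_mul_add_apply_star_mul (hρ : ∀ a, 0 ≤ ρ (star a * a)) (x y : R) :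
    (ρ (star x * y) + ρ (star y * x)).im = 0 := by
  have him (a : R) : (ρ (star a * a)).im = 0 := (Complex.nonneg_iff.mp (hρ a)).2.symm
  have := him (x + y)
  simp only [star_add, add_mul, mul_add, map_add, Complex.add_im, him x, him y] at this
  rw [Complex.add_im]
  linarith

variable [StarModule ℂ R]

theorem conj_apply_star_mul (hρ : ∀ a, 0 ≤ ρ (star a * a)) (x y : R) :
    conj (ρ (star x * y)) = ρ (star y * x) := by
  have h₁ := Complex.add_im _ _ ▸ im_apply_star_mul_add_apply_star_mul hρ x y
  have h₂ := im_apply_star_mul_add_apply_star_mul hρ x (Complex.I • y)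
  simp only [star_smul, mul_smul_comm, smul_mul_assoc, map_smul, smul_eq_mul, Complex.star_def,
    Complex.conj_I, Complex.add_im, Complex.mul_im, Complex.neg_re, Complex.neg_im,
    Complex.I_re, Complex.I_im] at h₂
  apply Complex.ext <;> simp only [Complex.conj_re, Complex.conj_im] <;> linarith

abbrev preInnerProductCoreOfNonneg (hρ : ∀ a, 0 ≤ ρ (star a * a)) :
    PreInnerProductSpace.Core ℂ R where
  inner a b := ρ (star a * b)
  conj_inner_symm a b := conj_apply_star_mul hρ b a
  re_inner_nonneg a := (Complex.nonneg_iff.mp (hρ a)).1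
  add_left a b c := by simp only [star_add, add_mul, map_add]
  smul_left a b c := by simp only [star_smul, smul_mul_assoc, map_smul, smul_eq_mul]; rfl

theorem norm_apply_star_mul_sq_le (hρ : ∀ a, 0 ≤ ρ (star a * a)) (x y : R) :
    ‖ρ (star x * y)‖ ^ 2 ≤ (ρ (star x * x)).re * (ρ (star y * y)).re := by
  let _ := preInnerProductCoreOfNonneg hρ
  have := InnerProductSpace.Core.inner_mul_inner_self_le (𝕜 := ℂ) x y
  change ‖ρ (star x * y)‖ * ‖ρ (star y * x)‖ ≤ _ at this
  rwa [← conj_apply_star_mul hρ x y, Complex.norm_conj, ← sq] at this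

end StarMulForm

section DenseRange

variable {𝕜 E ι : Type*} [RCLike 𝕜] [NormedAddCommGroup E] [InnerProductSpace 𝕜 E] {f : ι → E}

theorem DenseRange.continuousLinearMap_ext_inner (hf : DenseRange f) {S S' : E →L[𝕜] E}
    (h : ∀ i j, ⟪S (f i), f j⟫_𝕜 = ⟪S' (f i), f j⟫_𝕜) : S = S' :=
  DFunLike.coe_injective <| hf.equalizer S.continuous S'.continuous <|
    funext fun i => hf.eq_of_inner_left 𝕜 (h i)

theorem exists_inner_apply_eq_of_norm_le {F : Type*} [AddCommGroup F] [Module 𝕜 F]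
    [CompleteSpace E] {L : F →ₗ[𝕜] E} (hL : DenseRange L)
    (s : F →ₗ⋆[𝕜] F →ₗ[𝕜] 𝕜) {C : ℝ} (hC : 0 ≤ C)
    (hs : ∀ x y, ‖s x y‖ ≤ C * ‖L x‖ * ‖L y‖) :
    ∃ T : E →L[𝕜] E, ∀ x y, ⟪T (L x), L y⟫_𝕜 = s x y := by
  let v (x : F) : E := (InnerProductSpace.toDual 𝕜 E).symm ((s x).extendOfNorm L)
  have hv (x y : F) : ⟪v x, L y⟫_𝕜 = s x y := by
    rw [InnerProductSpace.toDual_symm_apply, LinearMap.extendOfNorm_eq hL ⟨_, hs x⟩]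
  have hv_norm (x : F) : ‖v x‖ ≤ C * ‖L x‖ := by
    rw [LinearIsometryEquiv.norm_map]
    exact LinearMap.opNorm_extendOfNorm_le hL (by positivity) (hs x)
  let V : F →ₗ[𝕜] E :=
    { toFun := v
      map_add' x x' := hL.eq_of_inner_left 𝕜 fun y => by simp [inner_add_left, hv]
      map_smul' c x := hL.eq_of_inner_left 𝕜 fun y => by simp [inner_smul_left, hv] }
  refine ⟨V.extendOfNorm L, fun x y => ?_⟩
  rw [LinearMap.extendOfNorm_eq hL ⟨C, hv_norm⟩]
  exact hv x y

end DenseRange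

section ComplexHilbert

variable {E : Type*} [NormedAddCommGroup E] [InnerProductSpace ℂ E]

theorem nonneg_inner_comm (x y : E) : 0 ≤ ⟪x, y⟫_ℂ ↔ 0 ≤ ⟪y, x⟫_ℂ := by
  rw [← inner_conj_symm, ← Complex.star_def, star_nonneg_iff]

theorem DenseRange.inner_self_apply_nonneg {ι : Type*} {f : ι → E} (hf : DenseRange f)
    {S : E →L[ℂ] E} (h : ∀ i, 0 ≤ ⟪S (f i), f i⟫_ℂ) (x : E) : 0 ≤ ⟪x, S x⟫_ℂ :=
  hf.induction_on x (isClosed_le continuous_const (by fun_prop)) fun i =>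
    (nonneg_inner_comm _ _).2 (h i)

theorem ContinuousLinearMap.isSelfAdjoint_of_inner_self_apply_nonneg [CompleteSpace E]
    {T : E →L[ℂ] E} (h : ∀ x, 0 ≤ ⟪x, T x⟫_ℂ) : IsSelfAdjoint T := by
  refine IsPositive.isSelfAdjoint (T.isPositive_iff_complex.2 fun x => ?_)
  obtain ⟨hre, him⟩ := Complex.nonneg_iff.mp ((nonneg_inner_comm _ _).1 (h x))
  exact ⟨Complex.ext rfl (by simp [him]), hre⟩

end ComplexHilbert

section Representation

variable {R E : Type*} [Ring R] [StarRing R] [Algebra ℂ R]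
  [NormedAddCommGroup E] [InnerProductSpace ℂ E] [CompleteSpace E]
  {π : R →⋆ₐ[ℂ] (E →L[ℂ] E)} {Ω : E}

theorem inner_map_star_apply (a : R) (x y : E) : ⟪x, π (star a) y⟫_ℂ = ⟪π a x, y⟫_ℂ := by
  rw [map_star, ContinuousLinearMap.star_eq_adjoint, ContinuousLinearMap.adjoint_inner_right]

theorem inner_map_star_mul_apply (a b : R) (x y : E) :
    ⟪x, π (star a * b) y⟫_ℂ = ⟪π a x, π b y⟫_ℂ := by
  rw [map_mul, mul_apply_eq_comp, inner_map_star_apply]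

theorem inner_apply_map_star_mul_self_nonneg {T : E →L[ℂ] E} {a : R} (hT : Commute T (π a))
    (hpos : ∀ ξ, 0 ≤ ⟪ξ, T ξ⟫_ℂ) : 0 ≤ ⟪T Ω, π (star a * a) Ω⟫_ℂ := by
  rw [inner_map_star_mul_apply, ← mul_apply_eq_comp, ← hT.eq, mul_apply_eq_comp,
    nonneg_inner_comm]
  exact hpos _

theorem eq_of_inner_apply_map_eq (hΩ : DenseRange fun a => π a Ω) {T S : E →L[ℂ] E}
    (hT : ∀ a, Commute T (π a)) (hS : ∀ a, Commute S (π a))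
    (h : ∀ a, ⟪T Ω, π a Ω⟫_ℂ = ⟪S Ω, π a Ω⟫_ℂ) : T = S :=
  hΩ.continuousLinearMap_ext_inner fun a b => by
    rw [← mul_apply_eq_comp, (hT a).eq, ← mul_apply_eq_comp, (hS a).eq, mul_apply_eq_comp,
      mul_apply_eq_comp, ← inner_map_star_apply, ← inner_map_star_apply, ← mul_apply_eq_comp,
      ← map_mul, h]

variable {ρ : R →ₗ[ℂ] ℂ}

theorem exists_inner_apply_map_eq_of_le [StarModule ℂ R] (hΩ : DenseRange fun a => π a Ω)
    (hρ : ∀ a, 0 ≤ ρ (star a * a))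
    (hρω : ∀ a, 0 ≤ ⟪Ω, π (star a * a) Ω⟫_ℂ - ρ (star a * a)) :
    ∃ T : E →L[ℂ] E, ∀ a b, ⟪T (π a Ω), π b Ω⟫_ℂ = ρ (star a * b) := by
  have hle (a : R) : (ρ (star a * a)).re ≤ ‖π a Ω‖ ^ 2 := by
    have := (Complex.nonneg_iff.mp (hρω a)).1
    rw [inner_map_star_mul_apply, Complex.sub_re, ← RCLike.re_to_complex,
      inner_self_eq_norm_sq] at this
    linarith
  have hbound (a b : R) : ‖ρ (star a * b)‖ ≤ 1 * ‖π a Ω‖ * ‖π b Ω‖ := by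
    refine le_of_pow_le_pow_left₀ two_ne_zero (by positivity) ?_
    calc ‖ρ (star a * b)‖ ^ 2 ≤ (ρ (star a * a)).re * (ρ (star b * b)).re :=
          norm_apply_star_mul_sq_le hρ a b
      _ ≤ ‖π a Ω‖ ^ 2 * ‖π b Ω‖ ^ 2 :=
          mul_le_mul (hle a) (hle b) (Complex.nonneg_iff.mp (hρ b)).1 (sq_nonneg _)
      _ = (1 * ‖π a Ω‖ * ‖π b Ω‖) ^ 2 := by ring
  exact exists_inner_apply_eq_of_norm_le
    (L := (ContinuousLinearMap.apply ℂ E Ω).toLinearMap ∘ₗ π.toAlgHom.toLinearMap) hΩ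
    (((LinearMap.mul ℂ R).compr₂ ρ).comp (starLinearEquiv ℂ).toLinearMap) zero_le_one hbound

variable {T : E →L[ℂ] E}
  (hT : ∀ a b, ⟪T (π a Ω), π b Ω⟫_ℂ = ρ (star a * b))
include hT

theorem inner_apply_map_eq_of_inner_eq (a : R) : ⟪T Ω, π a Ω⟫_ℂ = ρ a := by
  simpa using hT 1 a

variable (hΩ : DenseRange fun a => π a Ω)
include hΩ

theorem commute_of_inner_eq (c : R) : Commute T (π c) :=
  hΩ.continuousLinearMap_ext_inner fun a b => by
    simp only [mul_apply_eq_comp]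
    rw [← mul_apply_eq_comp (π c), ← map_mul, hT, ← inner_map_star_apply,
      ← mul_apply_eq_comp (π (star c)), ← map_mul, hT, star_mul, mul_assoc]

theorem inner_self_apply_nonneg_of_inner_eq (hρ : ∀ a, 0 ≤ ρ (star a * a)) (ξ : E) :
    0 ≤ ⟪ξ, T ξ⟫_ℂ :=
  hΩ.inner_self_apply_nonneg (fun a => hT a a ▸ hρ a) ξ

theorem inner_self_one_sub_apply_nonneg_of_inner_eq
    (hρω : ∀ a, 0 ≤ ⟪Ω, π (star a * a) Ω⟫_ℂ - ρ (star a * a)) (ξ : E) :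
    0 ≤ ⟪ξ, (1 - T) ξ⟫_ℂ :=
  hΩ.inner_self_apply_nonneg (fun a => by
    rw [sub_apply, one_apply_eq_self, inner_sub_left, hT, ← inner_map_star_mul_apply]
    exact hρω a) ξ

end Representation

theorem bijOn_commutant_positive_contractions_general
    (π : A →⋆ₐ[ℂ] (H →L[ℂ] H)) (Ω : H)
    (hcyc : Dense (Set.range fun a : A => π a Ω)) :
    Set.BijOn (fun T : H →L[ℂ] H => vectorFunctional π (T Ω) Ω)
      {T : H →L[ℂ] H | (∀ a : A, T * π a = π a * T) ∧ IsSelfAdjoint T ∧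
        (∀ ξ : H, 0 ≤ (inner ℂ ξ (T ξ) : ℂ)) ∧
        (∀ ξ : H, 0 ≤ (inner ℂ ξ ((1 - T) ξ) : ℂ))}
      {ρ : A →ₗ[ℂ] ℂ | (∀ a : A, 0 ≤ ρ (star a * a)) ∧
        ∀ a : A, 0 ≤ (vectorFunctional π Ω Ω - ρ) (star a * a)} := by
  refine ⟨?_, ?_, ?_⟩
  · rintro T ⟨hcomm, -, hT, hT₁⟩
    refine ⟨fun a => inner_apply_map_star_mul_self_nonneg (hcomm a) hT, fun a => ?_⟩
    have := inner_apply_map_star_mul_self_nonneg (Ω := Ω)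
      ((Commute.one_left _).sub_left (hcomm a)) hT₁
    rwa [sub_apply, one_apply_eq_self, inner_sub_left] at this
  · rintro T ⟨hT, -⟩ S ⟨hS, -⟩ hTS
    exact eq_of_inner_apply_map_eq hcyc hT hS (LinearMap.congr_fun hTS)
  · rintro ρ ⟨hρ, hρω⟩
    obtain ⟨T, hT⟩ := exists_inner_apply_map_eq_of_le hcyc hρ hρω
    have hTpos := inner_self_apply_nonneg_of_inner_eq hT hcyc hρ
    exact ⟨T, ⟨commute_of_inner_eq hT hcyc,
      ContinuousLinearMap.isSelfAdjoint_of_inner_self_apply_nonneg hTpos, hTpos,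
      inner_self_one_sub_apply_nonneg_of_inner_eq hT hcyc hρω⟩,
      LinearMap.ext (inner_apply_map_eq_of_inner_eq hT)⟩

/-- If `Ω` is a cyclic unit vector for a unital `*`-representation `π`
of a unital C*-algebra on a Hilbert space, and `ω(a) = ⟨Ω, π(a)Ω⟩`, then `T ↦ ω_T`, where
`ω_T(a) = ⟨TΩ, π(a)Ω⟩`, is a bijection from the positive contractions in the commutant
of `π(A)` onto the positive linear functionals dominated by `ω`. -/
theorem bijOn_commutant_positive_contractions
    (π : A →⋆ₐ[ℂ] (H →L[ℂ] H)) (Ω : H) (hΩ : ‖Ω‖ = 1)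
    (hcyc : Dense (Set.range fun a : A => π a Ω)) :
    Set.BijOn (fun T : H →L[ℂ] H => vectorFunctional π (T Ω) Ω)
      {T : H →L[ℂ] H | (∀ a : A, T * π a = π a * T) ∧ IsSelfAdjoint T ∧
        (∀ ξ : H, 0 ≤ (inner ℂ ξ (T ξ) : ℂ)) ∧
        (∀ ξ : H, 0 ≤ (inner ℂ ξ ((1 - T) ξ) : ℂ))}
      {ρ : A →ₗ[ℂ] ℂ | (∀ a : A, 0 ≤ ρ (star a * a)) ∧
        ∀ a : A, 0 ≤ (vectorFunctional π Ω Ω - ρ) (star a * a)} :=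
  bijOn_commutant_positive_contractions_general π Ω hcyc
end

section
/- Let f : ℂ → ℂ be an entire (complex-differentiable) function satisfying ∫_ℂ |f(w)|² e^{−|w|²} dA(w) < ∞, where dA is the Lebesgue area measure on ℂ. Then for every z ∈ ℂ the integral (1/π) ∫_ℂ e^{z \overline{w}} f(w) e^{−|w|²} dA(w) converges absolutely and equals f(z); i.e., K(z, \overline{w}) = e^{z \overline{w}} is a reproducing kernel for the space of e^{−|w|²}dA-square-integrable entire functions. -/
/-!
Substituting `w = u + z` turns `e^{z w̄ - |w|²}` into `e^{-z̄ u - |u|²}`, so the integral is the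
Gaussian integral of the entire function `g u = e^{-z̄ u} f (u + z)`. In polar coordinates the mean
value property on every circle reduces it to `g 0 ∫ e^{-|u|²} dA = π f z`. Absolute convergence
comes from `2ab ≤ a² + b²`, which bounds `|e^{z w̄} f w| e^{-|w|²}` by
`|f w|² e^{-|w|²} + e^{|z|² - |z - w|²}`.
-/

open MeasureTheory Set Real

theorem integrableOn_comp_polarCoord_symm {E : Type*} [NormedAddCommGroup E] [NormedSpace ℝ E]
    {f : ℝ × ℝ → E} (hf : Integrable f) :
    IntegrableOn (fun p : ℝ × ℝ => p.1 • f (polarCoord.symm p)) polarCoord.target := by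
  have hs := polarCoord.open_target.measurableSet
  have h := hf.integrableOn (s := polarCoord.symm '' polarCoord.target)
  rw [integrableOn_image_iff_integrableOn_abs_det_fderiv_smul volume hs
    (fun p _ => (hasFDerivAt_polarCoord_symm p).hasFDerivWithinAt) polarCoord.symm.injOn] at h
  refine h.congr_fun (fun p hp => ?_) hs
  simp only [det_fderivPolarCoordSymm, abs_of_pos (mem_Ioi.1 hp.1)]

theorem Complex.integrableOn_comp_polarCoord_symm {E : Type*} [NormedAddCommGroup E]
    [NormedSpace ℝ E] {f : ℂ → E} (hf : Integrable f) :
    IntegrableOn (fun p : ℝ × ℝ => p.1 • f (Complex.polarCoord.symm p)) polarCoord.target :=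
  _root_.integrableOn_comp_polarCoord_symm <|
    (Complex.volume_preserving_equiv_real_prod.symm.integrable_comp_emb
      Complex.measurableEquivRealProd.symm.measurableEmbedding).2 hf

theorem Complex.polarCoord_symm_eq_circleMap (r θ : ℝ) :
    Complex.polarCoord.symm (r, θ) = circleMap 0 r θ := by
  rw [Complex.polarCoord_symm_apply, circleMap, zero_add, Complex.exp_mul_I]
  push_cast
  ring

theorem Differentiable.integral_Ioo_comp_polarCoord_symm {E : Type*} [NormedAddCommGroup E]
    [NormedSpace ℂ E] [CompleteSpace E] {g : ℂ → E} (hg : Differentiable ℂ g) (r : ℝ) :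
    ∫ θ in Ioo (-π) π, g (Complex.polarCoord.symm (r, θ)) = (2 * π) • g 0 := by
  have hmean : Real.circleAverage g 0 r = g 0 := hg.diffContOnCl.circleAverage
  rw [Real.circleAverage_eq_integral_add (-π), intervalIntegral.integral_comp_add_right
    (fun θ => g (circleMap 0 r θ)), zero_add, show 2 * π + -π = π by ring,
    intervalIntegral.integral_of_le (by linarith [pi_pos]), integral_Ioc_eq_integral_Ioo] at hmean
  simp_rw [Complex.polarCoord_symm_eq_circleMap]
  rw [← hmean, smul_inv_smul₀ (by positivity)]

theorem Differentiable.integral_radial_smul {E : Type*} [NormedAddCommGroup E]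
    [NormedSpace ℂ E] [CompleteSpace E] {g : ℂ → E} (hg : Differentiable ℂ g) (ρ : ℝ → ℂ)
    (hint : Integrable fun w : ℂ => ρ ‖w‖ • g w) :
    ∫ w : ℂ, ρ ‖w‖ • g w = (2 * π * ∫ r in Ioi (0 : ℝ), r * ρ r) • g 0 := by
  have hpolar := Complex.integrableOn_comp_polarCoord_symm hint
  rw [← Complex.integral_comp_polarCoord_symm]
  rw [polarCoord_target, Measure.volume_eq_prod] at hpolar ⊢
  rw [setIntegral_prod _ hpolar]
  have hcircle : ∀ r ∈ Ioi (0 : ℝ), ∫ θ in Ioo (-π) π,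
      r • ρ ‖Complex.polarCoord.symm (r, θ)‖ • g (Complex.polarCoord.symm (r, θ))
        = ((r : ℂ) * ρ r) • (2 * π : ℂ) • g 0 := by
    intro r hr
    simp only [Complex.norm_polarCoord_symm, abs_of_pos (mem_Ioi.1 hr)]
    rw [integral_smul, integral_smul, hg.integral_Ioo_comp_polarCoord_symm, ← smul_assoc,
      Complex.real_smul, ← Complex.coe_smul]
    norm_cast
  rw [setIntegral_congr_fun measurableSet_Ioi hcircle, integral_smul_const, smul_smul, mul_comm]

theorem Differentiable.integral_mul_exp_neg_norm_sq {g : ℂ → ℂ} (hg : Differentiable ℂ g)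
    (hint : Integrable fun w : ℂ => g w * (Real.exp (-‖w‖ ^ 2) : ℂ)) :
    ∫ w : ℂ, g w * (Real.exp (-‖w‖ ^ 2) : ℂ) = π * g 0 := by
  have hradial : ∫ r in Ioi (0 : ℝ), (r : ℂ) * (Real.exp (-r ^ 2) : ℂ) = 1 / 2 := by
    simpa using integral_mul_cexp_neg_mul_sq (b := 1) (by norm_num)
  simp_rw [mul_comm (g _)] at hint ⊢
  calc ∫ w : ℂ, (Real.exp (-‖w‖ ^ 2) : ℂ) * g w
      = (2 * π * ∫ r in Ioi (0 : ℝ), r * (Real.exp (-r ^ 2) : ℂ)) • g 0 :=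
        hg.integral_radial_smul (fun r => (Real.exp (-r ^ 2) : ℂ)) hint
    _ = π * g 0 := by rw [hradial, smul_eq_mul]; ring

theorem integrable_exp_neg_mul_sq_norm {V : Type*} [NormedAddCommGroup V] [InnerProductSpace ℝ V]
    [FiniteDimensional ℝ V] [MeasurableSpace V] [BorelSpace V] {b : ℝ} (hb : 0 < b) :
    Integrable fun v : V => Real.exp (-b * ‖v‖ ^ 2) := by
  refine (GaussianFourier.integrable_cexp_neg_mul_sq_norm_add (V := V) (b := b)
    (by simpa using hb) 0 0).norm.congr (Filter.Eventually.of_forall fun v => ?_)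
  simp [Complex.norm_exp, ← Complex.ofReal_pow]

theorem cexp_mul_conj_add_mul_exp_neg_norm_sq (z u : ℂ) :
    Complex.exp (z * (starRingEnd ℂ) (u + z)) * (Real.exp (-‖u + z‖ ^ 2) : ℂ)
      = Complex.exp (-(starRingEnd ℂ) z * u) * (Real.exp (-‖u‖ ^ 2) : ℂ) := by
  push_cast
  rw [← Complex.mul_conj', ← Complex.mul_conj', ← Complex.exp_add, ← Complex.exp_add, map_add]
  ring_nf

theorem integrable_cexp_mul_conj_mul_exp_neg_norm_sq {f : ℂ → ℂ} (hf : AEStronglyMeasurable f)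
    (hint : Integrable fun w : ℂ => ‖f w‖ ^ 2 * Real.exp (-‖w‖ ^ 2)) (z : ℂ) :
    Integrable fun w : ℂ =>
      Complex.exp (z * (starRingEnd ℂ) w) * f w * (Real.exp (-‖w‖ ^ 2) : ℂ) := by
  have hgauss : Integrable fun w : ℂ => Real.exp (‖z‖ ^ 2) * Real.exp (-‖z - w‖ ^ 2) := by
    simpa using ((integrable_exp_neg_mul_sq_norm (V := ℂ) one_pos).comp_sub_left z).const_mul _
  refine (hint.add hgauss).mono' (by fun_prop) (Filter.Eventually.of_forall fun w => ?_)
  set E := Real.exp (z * (starRingEnd ℂ) w).re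
  have hE : Real.exp (‖z‖ ^ 2) * Real.exp (-‖z - w‖ ^ 2) = E ^ 2 * Real.exp (-‖w‖ ^ 2) := by
    rw [← Real.exp_add, ← Real.exp_nat_mul, ← Real.exp_add, ← Complex.normSq_eq_norm_sq,
      ← Complex.normSq_eq_norm_sq, ← Complex.normSq_eq_norm_sq, Complex.normSq_sub]
    ring_nf
  rw [Pi.add_apply, hE, norm_mul, norm_mul, Complex.norm_exp, Complex.norm_real,
    Real.norm_of_nonneg (by positivity)]
  show E * ‖f w‖ * _ ≤ _
  have hG : 0 ≤ Real.exp (-‖w‖ ^ 2) := Real.exp_nonneg _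
  have hE0 : 0 ≤ E := Real.exp_nonneg _
  nlinarith [mul_nonneg (sq_nonneg (E - ‖f w‖)) hG,
    mul_nonneg (mul_nonneg hE0 (norm_nonneg (f w))) hG]

/-- The exponential kernel `K(z, w̄) = e^{z w̄}` reproduces every entire
function that is square-integrable against the Gaussian measure `e^{-|w|²} dA(w)`:
`(1/π) ∫_ℂ e^{z w̄} f(w) e^{-|w|²} dA(w) = f(z)`, the integral converging absolutely. -/
theorem fock_reproducing_kernel (f : ℂ → ℂ) (hf : Differentiable ℂ f)
    (hint : Integrable (fun w : ℂ => ‖f w‖ ^ 2 * Real.exp (-‖w‖ ^ 2))) :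
    ∀ z : ℂ,
      Integrable (fun w : ℂ =>
        Complex.exp (z * (starRingEnd ℂ) w) * f w * (Real.exp (-‖w‖ ^ 2) : ℂ)) ∧
      (1 / (Real.pi : ℂ)) *
          (∫ w : ℂ,
            Complex.exp (z * (starRingEnd ℂ) w) * f w * (Real.exp (-‖w‖ ^ 2) : ℂ)) = f z := by
  intro z
  have hkernel :=
    integrable_cexp_mul_conj_mul_exp_neg_norm_sq hf.continuous.aestronglyMeasurable hint z
  refine ⟨hkernel, ?_⟩
  set g : ℂ → ℂ := fun u => Complex.exp (-(starRingEnd ℂ) z * u) * f (u + z)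
  have hshift : ∀ u : ℂ, Complex.exp (z * (starRingEnd ℂ) (u + z)) * f (u + z)
      * (Real.exp (-‖u + z‖ ^ 2) : ℂ) = g u * (Real.exp (-‖u‖ ^ 2) : ℂ) := fun u => by
    rw [mul_right_comm, cexp_mul_conj_add_mul_exp_neg_norm_sq, mul_right_comm]
  have hg : Differentiable ℂ g := by fun_prop
  rw [← integral_add_right_eq_self _ z]
  simp_rw [hshift]
  rw [hg.integral_mul_exp_neg_norm_sq (by simpa only [hshift] using hkernel.comp_add_right z)]
  simp [g, Real.pi_ne_zero]
end
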